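/- arXiv:2602.20465 — 3 statements merged into one kernel-verified Lean document; each statement's English description precedes it below -/
import Mathlib

section
/- In the stochastic setup with a fixed reward-mean sequence μ, for every δ ∈ (0,1), with probability at least 1 − δ the D-weighted pseudo-regret of the realized recommendation sequence is bounded by the D-weighted external regret plus a concentration term: PReg_D(μ) ≤ Reg_D + 2√(2·W₂(D)·ln(2K/δ)). -/
open Finset MeasureTheory ProbabilityTheory

noncomputable section

/-- A reward-mean sequence `μ` (with `μ t a` the mean reward of action `a` at time `t`)
is `ρ`-slowly-moving if consecutive mean vectors differ by at most `ρ` in sup-norm. -/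
def SlowlyMoving {T K : ℕ} (μ : Fin T → Fin K → ℝ) (ρ : ℝ) : Prop :=
  ∀ (t : Fin T) (ht : t.1 + 1 < T) (a : Fin K), |μ ⟨t.1 + 1, ht⟩ a - μ t a| ≤ ρ

/-- One-sided dispersion `Ψ_D(t) = E_{s∼D}|t-s|` of a temporal belief `D`. -/
def Psi {T : ℕ} (D : Fin T → ℝ) (t : Fin T) : ℝ :=
  ∑ s : Fin T, D s * |(t.1 : ℝ) - (s.1 : ℝ)|

/-- Max dispersion `Ψ_max(D)`: the supremum of `Ψ_D` over the smallest interval of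
time steps containing the support of `D`. -/
def PsiMax {T : ℕ} (D : Fin T → ℝ) : ℝ :=
  sSup (Psi D '' {t | ∃ t₁ t₂ : Fin T, D t₁ ≠ 0 ∧ D t₂ ≠ 0 ∧ t₁ ≤ t ∧ t ≤ t₂})

/-- Mean dispersion `Φ(D) = E_{s,t∼D}|s-t|`. -/
def PhiD {T : ℕ} (D : Fin T → ℝ) : ℝ :=
  ∑ s : Fin T, ∑ t : Fin T, D s * D t * |(s.1 : ℝ) - (t.1 : ℝ)|

/-- `W₂(D) = Σ_t D(t)²`. -/
def W2 {T : ℕ} (D : Fin T → ℝ) : ℝ := ∑ t : Fin T, (D t) ^ 2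

lemma univ_ne {K : ℕ} (hK : 2 ≤ K) : (univ : Finset (Fin K)).Nonempty :=
  ⟨⟨0, by omega⟩, mem_univ _⟩

lemma erase_ne {K : ℕ} (hK : 2 ≤ K) (a : Fin K) :
    ((univ : Finset (Fin K)).erase a).Nonempty := by
  rw [← Finset.card_pos, Finset.card_erase_of_mem (mem_univ a), Finset.card_univ,
    Fintype.card_fin]
  omega

/-- `gap_{μ,D}(a) = min_{b ≠ a} Σ_t D(t)(μ_{t,a} - μ_{t,b})`. -/
def gap {T K : ℕ} (hK : 2 ≤ K) (D : Fin T → ℝ) (μ : Fin T → Fin K → ℝ) (a : Fin K) : ℝ :=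
  ((univ : Finset (Fin K)).erase a).inf' (erase_ne hK a)
    (fun b => ∑ t : Fin T, D t * (μ t a - μ t b))

/-- `D`-weighted external regret of the recommendation sequence `I` on rewards `u`:
`max_{a} Σ_t D(t)(u_{t,a} - u_{t,I_t})`.  (Taking `u := μ` gives pseudo-regret.) -/
def extReg {T K : ℕ} (hK : 2 ≤ K) (D : Fin T → ℝ) (I : Fin T → Fin K)
    (u : Fin T → Fin K → ℝ) : ℝ :=
  (univ : Finset (Fin K)).sup' (univ_ne hK) (fun a => ∑ t : Fin T, D t * (u t a - u t (I t)))

/-- `D`-weighted swap regret: `max_{φ : A → A} Σ_t D(t)(u_{t,φ(I_t)} - u_{t,I_t})`. -/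
def swapReg {T K : ℕ} (D : Fin T → ℝ) (I : Fin T → Fin K)
    (u : Fin T → Fin K → ℝ) : ℝ :=
  (univ : Finset (Fin K → Fin K)).sup' ⟨id, mem_univ _⟩
    (fun φ => ∑ t : Fin T, D t * (u t (φ (I t)) - u t (I t)))

end

/-!
Fix an arm `a`. The gap between the `D`-weighted pseudo-regret and the realized regret against `a`
is `∑ₜ X_{t,a}` with `X_{t,a} = D(t) ((μ_{t,a} - μ_{t,I_t}) - (u_{t,a} - u_{t,I_t}))`. Given `F_{t-1}`,
the index `I_t` is frozen while `u_t` is independent with mean `μ_t`, so Hoeffding's lemma bounds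
the conditional moment generating function of `X_{t,a}` at `s` by `exp (D(t)² s² / 2)`. Chaining
these bounds along the filtration (Azuma–Hoeffding) shows that `∑ₜ X_{t,a}` is sub-Gaussian with
variance proxy `W₂(D)`; a Chernoff bound for each arm and a union bound over the `K` arms finish.
-/

open scoped NNReal

section Concentration

variable {Ω : Type*} {m : MeasurableSpace Ω} [m0 : MeasurableSpace Ω] {P : Measure Ω}

lemma integral_mul_comp_le_of_indep {ι E : Type*} [Fintype ι] [MeasurableSpace ι]
    [MeasurableSingletonClass ι] [MeasurableSpace E] (hm : m ≤ m0)
    {ξ : Ω → E} (hindep : Indep (MeasurableSpace.comap ξ inferInstance) m P)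
    {J : Ω → ι} (hJ : Measurable[m] J) {g : ι → E → ℝ} (hg : ∀ i, Measurable (g i))
    (hg_int : ∀ i, Integrable (fun ω => g i (ξ ω)) P) {B : ℝ}
    (hg_le : ∀ i, ∫ ω, g i (ξ ω) ∂P ≤ B)
    {F : Ω → ℝ} (hF : Measurable[m] F) (hF_int : Integrable F P) (hF_nonneg : 0 ≤ F) :
    ∫ ω, F ω * g (J ω) (ξ ω) ∂P ≤ B * ∫ ω, F ω ∂P := by
  classical
  set A : ι → Ω → ℝ := fun i => (J ⁻¹' {i}).indicator F
  have hA_meas (i : ι) : Measurable[m] (A i) := hF.indicator (hJ (measurableSet_singleton i))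
  have hA_int (i : ι) : Integrable (A i) P :=
    hF_int.indicator (hm _ (hJ (measurableSet_singleton i)))
  have hA_indep (i : ι) : IndepFun (A i) (fun ω => g i (ξ ω)) P := by
    have : IndepFun (A i) ξ P :=
      (IndepFun_iff_Indep _ _ _).2 (indep_of_indep_of_le_left hindep.symm (hA_meas i).comap_le)
    exact this.comp measurable_id (hg i)
  have hA_sum (ω : Ω) : ∑ i, A i ω = F ω := by
    simp [A, Set.indicator_apply]
  have hsplit (ω : Ω) : F ω * g (J ω) (ξ ω) = ∑ i, A i ω * g i (ξ ω) := by
    simp [A, Set.indicator_apply, ite_mul]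
  calc ∫ ω, F ω * g (J ω) (ξ ω) ∂P
      = ∑ i, ∫ ω, A i ω * g i (ξ ω) ∂P := by
        simp_rw [hsplit]
        exact integral_finsetSum _ fun i _ => (hA_indep i).integrable_mul (hA_int i) (hg_int i)
    _ = ∑ i, (∫ ω, A i ω ∂P) * ∫ ω, g i (ξ ω) ∂P := by
        refine Finset.sum_congr rfl fun i _ => ?_
        exact (hA_indep i).integral_fun_mul_eq_mul_integral (hA_int i).1 (hg_int i).1
    _ ≤ ∑ i, (∫ ω, A i ω ∂P) * B := by
        gcongr with i
        exact integral_nonneg (Set.indicator_nonneg fun ω _ => hF_nonneg ω)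
        exact hg_le i
    _ = B * ∫ ω, F ω ∂P := by
        rw [← Finset.sum_mul, ← integral_finsetSum _ fun i _ => hA_int i]
        simp_rw [hA_sum, mul_comm]

lemma hasSubgaussianMGF_weighted_diff_of_mem_Icc [IsProbabilityMeasure P] {ι : Type*}
    {ξ : Ω → ι → ℝ} (hξ : Measurable ξ) (hξ01 : ∀ ω i, ξ ω i ∈ Set.Icc (0 : ℝ) 1)
    {ν : ι → ℝ} (hν : ∀ i, ∫ ω, ξ ω i ∂P = ν i) (w : ℝ) (a i : ι) :
    HasSubgaussianMGF (fun ω => w * ((ν a - ν i) - (ξ ω a - ξ ω i))) (‖w‖₊ ^ 2) P := by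
  have hint (j : ι) : Integrable (fun ω => ξ ω j) P :=
    .of_mem_Icc 0 1 (hξ.eval.aemeasurable) (ae_of_all _ (hξ01 · j))
  have h := hasSubgaussianMGF_of_mem_Icc_of_integral_eq_zero (μ := P)
    (X := fun ω => w * ((ν a - ν i) - (ξ ω a - ξ ω i)))
    (a := w * (ν a - ν i) - |w|) (b := w * (ν a - ν i) + |w|) (by fun_prop) ?_ ?_
  · convert h using 1
    ext
    simp only [NNReal.coe_pow, coe_nnnorm, Real.norm_eq_abs, NNReal.coe_div, NNReal.coe_ofNat,
      add_sub_sub_cancel]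
    rw [← two_mul, abs_mul, abs_abs, abs_two, mul_div_cancel_left₀ _ two_ne_zero, sq_abs]
  · refine ae_of_all _ fun ω => ?_
    have hdiff : |ξ ω a - ξ ω i| ≤ 1 := abs_sub_le_of_nonneg_of_le
      (hξ01 ω a).1 (hξ01 ω a).2 (hξ01 ω i).1 (hξ01 ω i).2
    have hw : |w * (ξ ω a - ξ ω i)| ≤ |w| := by
      rw [abs_mul]; exact mul_le_of_le_one_right (abs_nonneg w) hdiff
    constructor <;> linarith [abs_le.1 hw]
  · have hdiff : Integrable (fun ω => ξ ω a - ξ ω i) P := (hint a).sub (hint i)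
    rw [integral_const_mul, integral_sub (integrable_const _) hdiff,
      integral_sub (hint a) (hint i), hν, hν]
    simp

lemma integral_mul_exp_weighted_diff_le_of_indep [IsProbabilityMeasure P] {ι : Type*} [Fintype ι]
    [MeasurableSpace ι] [MeasurableSingletonClass ι] (hm : m ≤ m0)
    {ξ : Ω → ι → ℝ} (hξ : Measurable ξ) (hξ01 : ∀ ω i, ξ ω i ∈ Set.Icc (0 : ℝ) 1)
    (hindep : Indep (MeasurableSpace.comap ξ inferInstance) m P)
    {ν : ι → ℝ} (hν : ∀ i, ∫ ω, ξ ω i ∂P = ν i) {J : Ω → ι} (hJ : Measurable[m] J)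
    (w s : ℝ) (a : ι) {F : Ω → ℝ} (hF : Measurable[m] F) (hF_int : Integrable F P)
    (hF_nonneg : 0 ≤ F) :
    ∫ ω, F ω * Real.exp (s * (w * ((ν a - ν (J ω)) - (ξ ω a - ξ ω (J ω))))) ∂P ≤
      Real.exp (‖w‖₊ ^ 2 * s ^ 2 / 2) * ∫ ω, F ω ∂P := by
  have hsub (i : ι) := hasSubgaussianMGF_weighted_diff_of_mem_Icc hξ hξ01 hν w a i
  exact integral_mul_comp_le_of_indep hm hindep hJ
    (g := fun i v => Real.exp (s * (w * ((ν a - ν i) - (v a - v i))))) (fun i => by fun_prop)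
    (fun i => (hsub i).integrable_exp_mul s) (fun i => (hsub i).mgf_le s)
    hF hF_int hF_nonneg

-- `hstep` is the conditional bound `E[exp (Y t) | ℱ t] ≤ exp (c t)`, tested against nonnegative
-- `ℱ t`-measurable weights; this avoids the conditional kernels (and the standard Borel
-- hypothesis) of `measure_sum_ge_le_of_hasCondSubgaussianMGF`.
lemma integral_exp_sum_le_of_forall_integral_mul_exp_le [IsProbabilityMeasure P]
    {ℱ : Filtration ℕ m0} {n : ℕ} (Y : Fin n → Ω → ℝ) (c : Fin n → ℝ)
    (hY : ∀ t : Fin n, Measurable[ℱ (t + 1)] (Y t)) (hY_bdd : ∀ t, ∃ C, ∀ ω, |Y t ω| ≤ C)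
    (hstep : ∀ (t : Fin n) (F : Ω → ℝ), Measurable[ℱ t] F → Integrable F P → 0 ≤ F →
      ∫ ω, F ω * Real.exp (Y t ω) ∂P ≤ Real.exp (c t) * ∫ ω, F ω ∂P) :
    ∫ ω, Real.exp (∑ t, Y t ω) ∂P ≤ Real.exp (∑ t, c t) := by
  induction n with
  | zero => simp
  | succ n ih =>
    choose C hC using hY_bdd
    set S : Ω → ℝ := fun ω => ∑ t : Fin n, Y t.castSucc ω
    have hS_meas : Measurable[ℱ n] S :=
      Finset.measurable_sum _ fun t _ => (hY t.castSucc).mono (ℱ.mono t.isLt) le_rfl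
    have hS_int : Integrable (fun ω => Real.exp (S ω)) P := by
      refine .of_bound ((hS_meas.mono (ℱ.le n) le_rfl).exp.aestronglyMeasurable)
        (Real.exp (∑ t : Fin n, C t.castSucc)) (ae_of_all _ fun ω => ?_)
      rw [Real.norm_eq_abs, Real.abs_exp, Real.exp_le_exp]
      exact (le_abs_self _).trans <|
        (Finset.abs_sum_le_sum_abs _ _).trans (Finset.sum_le_sum fun t _ => hC _ ω)
    calc ∫ ω, Real.exp (∑ t, Y t ω) ∂P
        = ∫ ω, Real.exp (S ω) * Real.exp (Y (Fin.last n) ω) ∂P := by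
          simp only [Fin.sum_univ_castSucc, Real.exp_add, S]
      _ ≤ Real.exp (c (Fin.last n)) * ∫ ω, Real.exp (S ω) ∂P :=
          hstep (Fin.last n) _ hS_meas.exp hS_int fun ω => (Real.exp_pos _).le
      _ ≤ Real.exp (c (Fin.last n)) * Real.exp (∑ t : Fin n, c t.castSucc) := by
          gcongr
          exact ih _ _ (fun t => hY t.castSucc) (fun t => ⟨_, hC t.castSucc⟩)
            fun t => hstep t.castSucc
      _ = Real.exp (∑ t, c t) := by
          rw [Fin.sum_univ_castSucc, Real.exp_add, mul_comm]

lemma hasSubgaussianMGF_sum_of_forall_integral_mul_exp_le [IsProbabilityMeasure P]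
    {ℱ : Filtration ℕ m0} {n : ℕ} (Y : Fin n → Ω → ℝ) (c : Fin n → ℝ≥0)
    (hY : ∀ t : Fin n, Measurable[ℱ (t + 1)] (Y t)) (hY_bdd : ∀ t, ∃ C, ∀ ω, |Y t ω| ≤ C)
    (hstep : ∀ (t : Fin n) (s : ℝ) (F : Ω → ℝ), Measurable[ℱ t] F → Integrable F P → 0 ≤ F →
      ∫ ω, F ω * Real.exp (s * Y t ω) ∂P ≤ Real.exp (c t * s ^ 2 / 2) * ∫ ω, F ω ∂P) :
    HasSubgaussianMGF (fun ω => ∑ t, Y t ω) (∑ t, c t) P where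
  integrable_exp_mul s := by
    choose C hC using hY_bdd
    refine .of_bound (Measurable.aestronglyMeasurable ?_) (Real.exp (|s| * ∑ t, C t))
      (ae_of_all _ fun ω => ?_)
    · exact (measurable_const.mul
        (Finset.measurable_sum _ fun t _ => (hY t).mono (ℱ.le _) le_rfl)).exp
    · rw [Real.norm_eq_abs, Real.abs_exp, Real.exp_le_exp]
      refine (le_abs_self _).trans ?_
      rw [abs_mul]
      gcongr
      exact (Finset.abs_sum_le_sum_abs _ _).trans (Finset.sum_le_sum fun t _ => hC t ω)
  mgf_le s := by
    have h := integral_exp_sum_le_of_forall_integral_mul_exp_le (P := P) (ℱ := ℱ)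
      (fun t ω => s * Y t ω) (fun t => c t * s ^ 2 / 2)
      (fun t => (hY t).const_mul s)
      (fun t => let ⟨C, hC⟩ := hY_bdd t
        ⟨|s| * C, fun ω => by rw [abs_mul]; exact mul_le_mul_of_nonneg_left (hC ω) (abs_nonneg s)⟩)
      (fun t => hstep t s)
    simp only [mgf, Finset.mul_sum]
    convert h using 2
    push_cast
    rw [Finset.sum_mul, Finset.sum_div]

lemma ProbabilityTheory.HasSubgaussianMGF.measure_ge_sqrt_log_le_inv {X : Ω → ℝ} {c : ℝ≥0}
    (h : HasSubgaussianMGF X c P) (hc : 0 < c) {r : ℝ} (hr : 1 ≤ r) :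
    P.real {ω | Real.sqrt (2 * c * Real.log r) ≤ X ω} ≤ r⁻¹ := by
  have hlog : 0 ≤ Real.log r := Real.log_nonneg hr
  calc P.real {ω | Real.sqrt (2 * c * Real.log r) ≤ X ω}
      ≤ Real.exp (-Real.sqrt (2 * c * Real.log r) ^ 2 / (2 * c)) := h.measure_ge_le (by positivity)
    _ = r⁻¹ := by
        rw [Real.sq_sqrt (by positivity), neg_div, mul_div_cancel_left₀ _ (by positivity),
          Real.exp_neg, Real.exp_log (by linarith)]

lemma ofReal_one_sub_le_of_measureReal_compl_le [IsProbabilityMeasure P] {s : Set Ω} {δ : ℝ}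
    (h : P.real sᶜ ≤ δ) :
    ENNReal.ofReal (1 - δ) ≤ P s := by
  have h1 : 1 ≤ P.real s + P.real sᶜ := by
    simpa [Set.union_compl_self] using measureReal_union_le (μ := P) s sᶜ
  rw [← ofReal_measureReal]
  exact ENNReal.ofReal_le_ofReal (by linarith)

end Concentration

lemma W2_nonneg {T : ℕ} (D : Fin T → ℝ) : 0 ≤ W2 D :=
  Finset.sum_nonneg fun t _ => sq_nonneg (D t)

lemma W2_pos_of_sum_eq_one {T : ℕ} {D : Fin T → ℝ} (hD1 : ∑ t, D t = 1) : 0 < W2 D := by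
  obtain ⟨t, ht⟩ : ∃ t, D t ≠ 0 := by
    by_contra! h
    simp [h] at hD1
  exact (pow_pos (abs_pos.2 ht) 2).trans_le <| by
    rw [sq_abs]
    exact Finset.single_le_sum (fun s _ => sq_nonneg (D s)) (Finset.mem_univ t)

def regretDeviation {T K : ℕ} (D : Fin T → ℝ) (I : Fin T → Fin K) (μ u : Fin T → Fin K → ℝ)
    (a : Fin K) (t : Fin T) : ℝ :=
  D t * ((μ t a - μ t (I t)) - (u t a - u t (I t)))

lemma extReg_le_extReg_add_of_sum_regretDeviation_le {T K : ℕ} (hK : 2 ≤ K) (D : Fin T → ℝ)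
    (I : Fin T → Fin K) (μ u : Fin T → Fin K → ℝ) {ε : ℝ}
    (h : ∀ a, ∑ t, regretDeviation D I μ u a t ≤ ε) :
    extReg hK D I μ ≤ extReg hK D I u + ε := by
  refine Finset.sup'_le _ _ fun a _ => ?_
  have hsplit : ∑ t, D t * (μ t a - μ t (I t)) =
      ∑ t, D t * (u t a - u t (I t)) + ∑ t, regretDeviation D I μ u a t := by
    rw [← Finset.sum_add_distrib]
    exact Finset.sum_congr rfl fun t _ => by unfold regretDeviation; ring
  have hreg : ∑ t, D t * (u t a - u t (I t)) ≤ extReg hK D I u :=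
    Finset.le_sup' (fun b => ∑ t, D t * (u t b - u t (I t))) (Finset.mem_univ a)
  linarith [h a]

lemma hasSubgaussianMGF_sum_regretDeviation {T K : ℕ} {Ω : Type*} [m0 : MeasurableSpace Ω]
    {P : Measure Ω} [IsProbabilityMeasure P] (ℱ : Filtration ℕ m0)
    {μ : Fin T → Fin K → ℝ} (hμ : ∀ t a, μ t a ∈ Set.Icc (0 : ℝ) 1) (D : Fin T → ℝ)
    {I : Fin T → Ω → Fin K} (hI : ∀ t : Fin T, Measurable[ℱ t.1] (I t))
    {u : Fin T → Ω → Fin K → ℝ} (hu01 : ∀ t ω a, u t ω a ∈ Set.Icc (0 : ℝ) 1)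
    (huMeas : ∀ t : Fin T, Measurable[ℱ (t.1 + 1)] (u t))
    (huIndep : ∀ t : Fin T, Indep (MeasurableSpace.comap (u t) inferInstance) (ℱ t.1) P)
    (huMean : ∀ (t : Fin T) (a : Fin K), ∫ ω, u t ω a ∂P = μ t a) (a : Fin K) :
    HasSubgaussianMGF (fun ω => ∑ t, regretDeviation D (fun t => I t ω) μ (fun t => u t ω) a t)
      ⟨W2 D, W2_nonneg D⟩ P := by
  have hW : (⟨W2 D, W2_nonneg D⟩ : ℝ≥0) = ∑ t, ‖D t‖₊ ^ 2 := by
    ext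
    simp [W2]
  rw [hW]
  refine hasSubgaussianMGF_sum_of_forall_integral_mul_exp_le (ℱ := ℱ) _ _ (fun t => ?_)
    (fun t => ⟨|D t| * 2, fun ω => ?_⟩) (fun t s F hF hF_int hF_nonneg => ?_)
  · have hI' : Measurable[ℱ (t + 1)] (I t) := (hI t).mono (ℱ.mono (Nat.le_succ _)) le_rfl
    exact (measurable_from_prod_countable_left
      (f := fun p : (Fin K → ℝ) × Fin K => D t * ((μ t a - μ t p.2) - (p.1 a - p.1 p.2)))
      fun i => by fun_prop).comp ((huMeas t).prodMk hI')
  · have hμ_diff := abs_sub_le_of_nonneg_of_le (hμ t a).1 (hμ t a).2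
      (hμ t (I t ω)).1 (hμ t (I t ω)).2
    have hu_diff := abs_sub_le_of_nonneg_of_le (hu01 t ω a).1 (hu01 t ω a).2
      (hu01 t ω (I t ω)).1 (hu01 t ω (I t ω)).2
    rw [regretDeviation, abs_mul]
    gcongr
    exact (abs_sub _ _).trans (by linarith)
  · exact integral_mul_exp_weighted_diff_le_of_indep (ℱ.le t) ((huMeas t).mono (ℱ.le _) le_rfl)
      (hu01 t) (huIndep t) (huMean t) (hI t) (D t) s a hF hF_int hF_nonneg

theorem stmt1_general {T K : ℕ} (hK : 2 ≤ K)
    {Ω : Type*} [m0 : MeasurableSpace Ω] (P : Measure Ω) [IsProbabilityMeasure P]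
    (ℱ : Filtration ℕ m0)
    (μ : Fin T → Fin K → ℝ) (hμ : ∀ t a, μ t a ∈ Set.Icc (0 : ℝ) 1)
    (D : Fin T → ℝ) (hD1 : ∑ t, D t = 1)
    (I : Fin T → Ω → Fin K) (hI : ∀ t : Fin T, Measurable[ℱ t.1] (I t))
    (u : Fin T → Ω → Fin K → ℝ)
    (hu01 : ∀ t ω a, u t ω a ∈ Set.Icc (0 : ℝ) 1)
    (huMeas : ∀ t : Fin T, Measurable[ℱ (t.1 + 1)] (u t))
    (huIndep : ∀ t : Fin T,
      Indep (MeasurableSpace.comap (u t) inferInstance) (ℱ t.1) P)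
    (huMean : ∀ (t : Fin T) (a : Fin K), ∫ ω, u t ω a ∂P = μ t a)
    (δ : ℝ) (hδ : δ ∈ Set.Ioo (0 : ℝ) 1) :
    ENNReal.ofReal (1 - δ) ≤
      P {ω | extReg hK D (fun t => I t ω) μ
        ≤ extReg hK D (fun t => I t ω) (fun t => u t ω)
          + 2 * Real.sqrt (2 * W2 D * Real.log (2 * K / δ))} := by
  obtain ⟨hδ0, hδ1⟩ := hδ
  set r : ℝ := 2 * K / δ
  set S : Fin K → Ω → ℝ :=
    fun a ω => ∑ t, regretDeviation D (fun t => I t ω) μ (fun t => u t ω) a t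
  have hr : 1 ≤ r := by
    rw [le_div_iff₀ hδ0]
    linarith [(Nat.ofNat_le_cast.2 hK : (2 : ℝ) ≤ K)]
  have hbad : {ω | extReg hK D (fun t => I t ω) μ
        ≤ extReg hK D (fun t => I t ω) (fun t => u t ω) + 2 * Real.sqrt (2 * W2 D * Real.log r)}ᶜ
      ⊆ ⋃ a, {ω | Real.sqrt (2 * W2 D * Real.log r) ≤ S a ω} := by
    intro ω hω
    by_contra! hgood
    simp only [Set.mem_iUnion, Set.mem_ofPred_eq, not_exists, not_le] at hgood
    refine hω (extReg_le_extReg_add_of_sum_regretDeviation_le hK D _ μ _ fun a => ?_)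
    linarith [hgood a, Real.sqrt_nonneg (2 * W2 D * Real.log r)]
  refine ofReal_one_sub_le_of_measureReal_compl_le ?_
  calc P.real _ ≤ ∑ a, P.real {ω | Real.sqrt (2 * W2 D * Real.log r) ≤ S a ω} :=
        (measureReal_mono hbad).trans (measureReal_iUnion_fintype_le _)
    _ ≤ ∑ _a : Fin K, r⁻¹ := Finset.sum_le_sum fun a _ =>
        (hasSubgaussianMGF_sum_regretDeviation ℱ hμ D hI hu01 huMeas huIndep huMean a
          ).measure_ge_sqrt_log_le_inv (W2_pos_of_sum_eq_one hD1) hr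
    _ ≤ δ := by
        rw [Finset.sum_const, Finset.card_univ, Fintype.card_fin, nsmul_eq_mul, inv_div]
        field_simp
        linarith

/-- In the stochastic setup (recommendation `I t` is `F_{t-1}`-measurable,
reward vector `u t` is `F_t`-measurable, independent of `F_{t-1}`, with mean `μ t`),
for every δ ∈ (0,1), with probability at least 1 − δ:
PReg_D(μ) ≤ Reg_D + 2√(2·W₂(D)·ln(2K/δ)). -/
theorem stmt1 {T K : ℕ} (hK : 2 ≤ K)
    {Ω : Type*} [m0 : MeasurableSpace Ω] (P : Measure Ω) [IsProbabilityMeasure P]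
    (ℱ : Filtration ℕ m0)
    (μ : Fin T → Fin K → ℝ) (hμ : ∀ t a, μ t a ∈ Set.Icc (0 : ℝ) 1)
    (D : Fin T → ℝ) (hD0 : ∀ t, 0 ≤ D t) (hD1 : ∑ t, D t = 1)
    (I : Fin T → Ω → Fin K) (hI : ∀ t : Fin T, Measurable[ℱ t.1] (I t))
    (u : Fin T → Ω → Fin K → ℝ)
    (hu01 : ∀ t ω a, u t ω a ∈ Set.Icc (0 : ℝ) 1)
    (huMeas : ∀ t : Fin T, Measurable[ℱ (t.1 + 1)] (u t))
    (huIndep : ∀ t : Fin T,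
      Indep (MeasurableSpace.comap (u t) inferInstance) (ℱ t.1) P)
    (huMean : ∀ (t : Fin T) (a : Fin K), ∫ ω, u t ω a ∂P = μ t a)
    (δ : ℝ) (hδ : δ ∈ Set.Ioo (0 : ℝ) 1) :
    ENNReal.ofReal (1 - δ) ≤
      P {ω | extReg hK D (fun t => I t ω) μ
        ≤ extReg hK D (fun t => I t ω) (fun t => u t ω)
          + 2 * Real.sqrt (2 * W2 D * Real.log (2 * K / δ))} :=
  stmt1_general hK (m0 := m0) P ℱ μ hμ D hD1 I hI u hu01 huMeas huIndep huMean δ hδ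
end

section
/- In the stochastic setup with a fixed reward-mean sequence μ, the expected D-weighted pseudo-regret is bounded by the expected D-weighted external regret plus a concentration term: E[PReg_D(μ)] ≤ E[Reg_D] + 2√(2·W₂(D)·ln(2K)). -/
open Finset MeasureTheory ProbabilityTheory

/-!
The best fixed action for the means is deterministic, so the expected pseudo-regret is
`max_a E[Σ_t D(t) (μ_{t,a} - μ_{t,I_t})]`. Since `ũ_t` is independent of `F_{t-1}`, with respect
to which `I_t` is measurable, `E[ũ_{t,I_t}] = E[μ_{t,I_t}]`; hence each of these expectations equals
`E[Σ_t D(t) (ũ_{t,a} - ũ_{t,I_t})]`, and a maximum of expectations is at most the expectation of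
the maximum. The inequality therefore holds even without the concentration term.
-/

section

variable {Ω ι : Type*} [MeasurableSpace Ω] {P : Measure Ω}

lemma integrable_finset_sup' {s : Finset ι} (hs : s.Nonempty) {f : ι → Ω → ℝ}
    (hf : ∀ i ∈ s, Integrable (f i) P) :
    Integrable (fun ω => s.sup' hs (f · ω)) P := by
  simp_rw [← Finset.sup'_apply]
  exact Finset.sup'_induction hs f (p := (Integrable · P)) (fun _ h₁ _ h₂ => h₁.sup h₂) hf

lemma sup'_integral_le_integral_sup' {s : Finset ι} (hs : s.Nonempty) {f : ι → Ω → ℝ}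
    (hf : ∀ i ∈ s, Integrable (f i) P) :
    s.sup' hs (fun i => ∫ ω, f i ω ∂P) ≤ ∫ ω, s.sup' hs (f · ω) ∂P :=
  Finset.sup'_le _ _ fun i hi =>
    integral_mono (hf i hi) (integrable_finset_sup' hs hf) fun ω => Finset.le_sup' (f · ω) hi

lemma integral_sup'_const_sub [IsProbabilityMeasure P] {s : Finset ι} (hs : s.Nonempty)
    (c : ι → ℝ) {g : Ω → ℝ} (hg : Integrable g P) :
    ∫ ω, s.sup' hs (fun i => c i - g ω) ∂P = s.sup' hs (fun i => ∫ ω, (c i - g ω) ∂P) := by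
  have hsub : ∀ x : ℝ, s.sup' hs (fun i => c i - x) = s.sup' hs c - x := fun x =>
    (map_finset_sup' (OrderIso.subRight x) hs c).symm
  simp only [integral_sub (integrable_const _) hg, integral_const, probReal_univ, one_smul,
    hsub]

lemma eval_eq_sum_mul_indicator [Fintype ι] (x : ι → ℝ) (j : ι) :
    x j = ∑ i, x i * ({i} : Set ι).indicator 1 j := by
  classical
  rw [Finset.sum_eq_single j] <;> simp +contextual [eq_comm]

variable [Fintype ι] [MeasurableSpace ι] [MeasurableSingletonClass ι] [IsFiniteMeasure P]
  {X : Ω → ι → ℝ} {J : Ω → ι}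

lemma integrable_indicator_singleton_comp (hJ : Measurable J) (i : ι) :
    Integrable (fun ω => ({i} : Set ι).indicator (1 : ι → ℝ) (J ω)) P :=
  (Integrable.of_finite (f := ({i} : Set ι).indicator 1)).comp_measurable hJ

lemma integrable_mul_indicator_singleton_comp {f : Ω → ℝ} (hf : Integrable f P)
    (hJ : Measurable J) (i : ι) :
    Integrable (fun ω => f ω * ({i} : Set ι).indicator (1 : ι → ℝ) (J ω)) P :=
  hf.mul_bdd (c := 1) (integrable_indicator_singleton_comp hJ i).aestronglyMeasurable
    (.of_forall fun _ => (norm_indicator_le_norm_self _ _).trans (by simp))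

lemma integrable_eval_comp (hX : ∀ i, Integrable (X · i) P) (hJ : Measurable J) :
    Integrable (fun ω => X ω (J ω)) P := by
  simp_rw [eval_eq_sum_mul_indicator (X _) (J _)]
  exact integrable_finsetSum _ fun i _ => integrable_mul_indicator_singleton_comp (hX i) hJ i

lemma ProbabilityTheory.IndepFun.integral_eval_eq_integral_mean_comp (hXJ : IndepFun X J P)
    (hX : Measurable X) (hJ : Measurable J) (hXi : ∀ i, Integrable (X · i) P) {ν : ι → ℝ}
    (hν : ∀ i, ∫ ω, X ω i ∂P = ν i) :
    ∫ ω, X ω (J ω) ∂P = ∫ ω, ν (J ω) ∂P := by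
  simp_rw [eval_eq_sum_mul_indicator (X _) (J _), eval_eq_sum_mul_indicator ν (J _)]
  rw [integral_finsetSum univ fun i _ => integrable_mul_indicator_singleton_comp (hXi i) hJ i,
    integral_finsetSum univ fun i _ =>
      integrable_mul_indicator_singleton_comp (integrable_const (ν i)) hJ i]
  refine Finset.sum_congr rfl fun i _ => ?_
  rw [hXJ.integral_fun_comp_mul_comp (f := fun x => x i) (g := ({i} : Set ι).indicator 1)
    hX.aemeasurable hJ.aemeasurable (measurable_pi_apply i).aestronglyMeasurable
    (measurable_of_finite _).aestronglyMeasurable, hν, integral_const_mul]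

end

section

variable {T K : ℕ} {Ω : Type*} [MeasurableSpace Ω] {P : Measure Ω} [IsProbabilityMeasure P]
  {I : Fin T → Ω → Fin K}

lemma integral_extReg_eq_sup'_integral (hK : 2 ≤ K) (D : Fin T → ℝ)
    (hI : ∀ t, Measurable (I t)) (μ : Fin T → Fin K → ℝ) :
    ∫ ω, extReg hK D (fun t => I t ω) μ ∂P =
      univ.sup' (univ_ne hK) (fun a => ∫ ω, ∑ t, D t * (μ t a - μ t (I t ω)) ∂P) := by
  simp only [extReg, mul_sub, Finset.sum_sub_distrib]
  exact integral_sup'_const_sub _ _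
    (integrable_finsetSum _ fun t _ => (Integrable.of_finite.comp_measurable (hI t)).const_mul _)

lemma integral_sum_mul_sub_eq_of_integral_eq {u : Fin T → Ω → Fin K → ℝ}
    {μ : Fin T → Fin K → ℝ} (D : Fin T → ℝ) (a : Fin K)
    (hu : ∀ t a, Integrable (fun ω => u t ω a) P) (hI : ∀ t, Measurable (I t))
    (huμ : ∀ t a, ∫ ω, u t ω a ∂P = μ t a)
    (huμI : ∀ t, ∫ ω, u t ω (I t ω) ∂P = ∫ ω, μ t (I t ω) ∂P) :
    ∫ ω, ∑ t, D t * (u t ω a - u t ω (I t ω)) ∂P =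
      ∫ ω, ∑ t, D t * (μ t a - μ t (I t ω)) ∂P := by
  have huI : ∀ t, Integrable (fun ω => u t ω (I t ω)) P := fun t =>
    integrable_eval_comp (hu t) (hI t)
  have hμI : ∀ t, Integrable (fun ω => μ t (I t ω)) P := fun t =>
    Integrable.of_finite.comp_measurable (hI t)
  rw [integral_finsetSum _ fun t _ => ((hu t a).sub' (huI t)).const_mul (D t),
    integral_finsetSum _ fun t _ => ((integrable_const _).sub' (hμI t)).const_mul (D t)]
  refine Finset.sum_congr rfl fun t _ => ?_
  rw [integral_const_mul, integral_const_mul, integral_sub (hu t a) (huI t),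
    integral_sub (integrable_const _) (hμI t), huμ, huμI, integral_const, probReal_univ,
    one_smul]

end

theorem stmt2_general {T K : ℕ} (hK : 2 ≤ K)
    {Ω : Type*} [m0 : MeasurableSpace Ω] (P : Measure Ω) [IsProbabilityMeasure P]
    (ℱ : Filtration ℕ m0)
    (μ : Fin T → Fin K → ℝ)
    (D : Fin T → ℝ)
    (I : Fin T → Ω → Fin K) (hI : ∀ t : Fin T, Measurable[ℱ t.1] (I t))
    (u : Fin T → Ω → Fin K → ℝ)
    (hu01 : ∀ t ω a, u t ω a ∈ Set.Icc (0 : ℝ) 1)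
    (huMeas : ∀ t : Fin T, Measurable[ℱ (t.1 + 1)] (u t))
    (huIndep : ∀ t : Fin T,
      Indep (MeasurableSpace.comap (u t) inferInstance) (ℱ t.1) P)
    (huMean : ∀ (t : Fin T) (a : Fin K), ∫ ω, u t ω a ∂P = μ t a) :
    ∫ ω, extReg hK D (fun t => I t ω) μ ∂P ≤
      (∫ ω, extReg hK D (fun t => I t ω) (fun t => u t ω) ∂P)
        + 2 * Real.sqrt (2 * W2 D * Real.log (2 * K)) := by
  have hu : ∀ t, Measurable (u t) := fun t => (huMeas t).mono (ℱ.le _) le_rfl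
  have hI' : ∀ t, Measurable (I t) := fun t => (hI t).mono (ℱ.le _) le_rfl
  have hu_int : ∀ t a, Integrable (fun ω => u t ω a) P := fun t a =>
    Integrable.of_mem_Icc 0 1 ((measurable_pi_apply a).comp (hu t)).aemeasurable
      (.of_forall (hu01 t · a))
  have huμI : ∀ t, ∫ ω, u t ω (I t ω) ∂P = ∫ ω, μ t (I t ω) ∂P := fun t =>
    ((IndepFun_iff_Indep _ _ _).2 (indep_of_indep_of_le_right (huIndep t) (hI t).comap_le)
      ).integral_eval_eq_integral_mean_comp (hu t) (hI' t) (hu_int t) (huMean t)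
  calc ∫ ω, extReg hK D (fun t => I t ω) μ ∂P
      = univ.sup' (univ_ne hK) (fun a => ∫ ω, ∑ t, D t * (μ t a - μ t (I t ω)) ∂P) :=
        integral_extReg_eq_sup'_integral hK D hI' μ
    _ = univ.sup' (univ_ne hK) (fun a => ∫ ω, ∑ t, D t * (u t ω a - u t ω (I t ω)) ∂P) := by
        simp_rw [integral_sum_mul_sub_eq_of_integral_eq D _ hu_int hI' huMean huμI]
    _ ≤ ∫ ω, extReg hK D (fun t => I t ω) (fun t => u t ω) ∂P :=
        sup'_integral_le_integral_sup' _ fun a _ => integrable_finsetSum _ fun t _ =>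
          ((hu_int t a).sub' (integrable_eval_comp (hu_int t) (hI' t))).const_mul (D t)
    _ ≤ _ := le_add_of_nonneg_right (by positivity)

/-- In the stochastic setup, the expected D-weighted pseudo-regret is
bounded by the expected D-weighted external regret plus 2√(2·W₂(D)·ln(2K)). -/
theorem stmt2 {T K : ℕ} (hK : 2 ≤ K)
    {Ω : Type*} [m0 : MeasurableSpace Ω] (P : Measure Ω) [IsProbabilityMeasure P]
    (ℱ : Filtration ℕ m0)
    (μ : Fin T → Fin K → ℝ) (hμ : ∀ t a, μ t a ∈ Set.Icc (0 : ℝ) 1)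
    (D : Fin T → ℝ) (hD0 : ∀ t, 0 ≤ D t) (hD1 : ∑ t, D t = 1)
    (I : Fin T → Ω → Fin K) (hI : ∀ t : Fin T, Measurable[ℱ t.1] (I t))
    (u : Fin T → Ω → Fin K → ℝ)
    (hu01 : ∀ t ω a, u t ω a ∈ Set.Icc (0 : ℝ) 1)
    (huMeas : ∀ t : Fin T, Measurable[ℱ (t.1 + 1)] (u t))
    (huIndep : ∀ t : Fin T,
      Indep (MeasurableSpace.comap (u t) inferInstance) (ℱ t.1) P)
    (huMean : ∀ (t : Fin T) (a : Fin K), ∫ ω, u t ω a ∂P = μ t a) :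
    ∫ ω, extReg hK D (fun t => I t ω) μ ∂P ≤
      (∫ ω, extReg hK D (fun t => I t ω) (fun t => u t ω) ∂P)
        + 2 * Real.sqrt (2 * W2 D * Real.log (2 * K)) :=
  stmt2_general hK (m0 := m0) P ℱ μ D I hI u hu01 huMeas huIndep huMean
end

section
/- For any ρ-slowly-moving reward-mean sequence μ, any temporal belief D on {1,…,T}, and any sequence of recommendations I_1,…,I_T ∈ A, the D-weighted pseudo swap-regret is bounded by the D-weighted pseudo-regret plus a drift term: PSReg_D(μ) ≤ PReg_D(μ) + 2ρ·Φ(D). -/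
open Finset MeasureTheory ProbabilityTheory

/-!
Let `b` maximise the `D`-weighted mean reward `Σ_s D(s) μ_s(b)`. Moving `μ_t(c)` to any other
time `s` costs at most `ρ|t - s|`, so averaging over `s ∼ D` gives
`μ_t(c) ≤ Σ_s D(s) μ_s(b) + ρ Ψ_D(t)` for every action `c`. Hence every swap `φ` earns at most
what the fixed action `b` earns plus `ρ Σ_t D(t) Ψ_D(t) = ρ Φ(D)`, and `ρ Φ(D) ≥ 0`.
-/

namespace SlowlyMoving

variable {T K : ℕ} {μ : Fin T → Fin K → ℝ} {ρ : ℝ}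

theorem abs_sub_le_of_le (h : SlowlyMoving μ ρ) {s t : Fin T} (hst : s ≤ t) (c : Fin K) :
    |μ t c - μ s c| ≤ ρ * ((t : ℝ) - s) := by
  let f : ℕ → ℝ := fun k => if hk : k < T then μ ⟨k, hk⟩ c else 0
  have hstep : ∀ {k}, s.1 ≤ k → k < t.1 → dist (f k) (f (k + 1)) ≤ ρ := by
    intro k _ hk
    have hk1 : k + 1 < T := by omega
    simp only [f, dif_pos hk1, dif_pos (hk.trans t.2), Real.dist_eq, abs_sub_comm]
    exact h ⟨k, _⟩ hk1 c
  have hsum := dist_le_Ico_sum_of_dist_le (f := f) (Fin.le_def.1 hst) hstep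
  rw [sum_const, Nat.card_Ico, nsmul_eq_mul, Nat.cast_sub (Fin.le_def.1 hst)] at hsum
  simpa [f, Real.dist_eq, abs_sub_comm, mul_comm] using hsum

theorem abs_sub_le (h : SlowlyMoving μ ρ) (s t : Fin T) (c : Fin K) :
    |μ t c - μ s c| ≤ ρ * |(t : ℝ) - s| := by
  rcases le_total s t with hst | hts
  · rw [abs_of_nonneg (a := (t : ℝ) - s) (sub_nonneg.2 (by exact_mod_cast hst))]
    exact h.abs_sub_le_of_le hst c
  · rw [abs_sub_comm, abs_sub_comm (t : ℝ),
      abs_of_nonneg (a := (s : ℝ) - t) (sub_nonneg.2 (by exact_mod_cast hts))]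
    exact h.abs_sub_le_of_le hts c

theorem nonneg (h : SlowlyMoving μ ρ) (hT : 1 < T) (hK : 0 < K) : 0 ≤ ρ :=
  (abs_nonneg _).trans (h ⟨0, by omega⟩ hT ⟨0, hK⟩)

end SlowlyMoving

section Dispersion

variable {T : ℕ} {D : Fin T → ℝ}

theorem PhiD_nonneg (hD0 : ∀ t, 0 ≤ D t) : 0 ≤ PhiD D :=
  sum_nonneg fun s _ => sum_nonneg fun t _ => by have := hD0 s; have := hD0 t; positivity

theorem PhiD_eq_zero_of_le_one (hT : T ≤ 1) : PhiD D = 0 := by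
  have : Subsingleton (Fin T) := Fin.subsingleton_iff_le_one.2 hT
  refine sum_eq_zero fun s _ => sum_eq_zero fun t _ => ?_
  simp [Subsingleton.elim s t]

theorem sum_mul_Psi (D : Fin T → ℝ) : ∑ t, D t * Psi D t = PhiD D := by
  simp only [PhiD, Psi, mul_sum, mul_assoc]

end Dispersion

section Regret

variable {T K : ℕ} {ρ : ℝ} {μ : Fin T → Fin K → ℝ} {D : Fin T → ℝ}

theorem SlowlyMoving.le_sum_mul_add_mul_Psi (hslow : SlowlyMoving μ ρ) (hD0 : ∀ t, 0 ≤ D t)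
    (hD1 : ∑ t, D t = 1) (t : Fin T) (c : Fin K) :
    μ t c ≤ ∑ s, D s * μ s c + ρ * Psi D t :=
  calc μ t c = ∑ s, D s * μ t c := by rw [← sum_mul, hD1, one_mul]
    _ ≤ ∑ s, D s * (μ s c + ρ * |(t : ℝ) - s|) :=
      sum_le_sum fun s _ => mul_le_mul_of_nonneg_left
        (by linarith [le_abs_self (μ t c - μ s c), hslow.abs_sub_le s t c]) (hD0 s)
    _ = ∑ s, D s * μ s c + ρ * Psi D t := by
      simp only [Psi, mul_add, sum_add_distrib, mul_sum, mul_left_comm ρ]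

theorem SlowlyMoving.swapReg_le_extReg_add_mul_PhiD (hK : 2 ≤ K) (hslow : SlowlyMoving μ ρ)
    (hD0 : ∀ t, 0 ≤ D t) (hD1 : ∑ t, D t = 1) (I : Fin T → Fin K) :
    swapReg D I μ ≤ extReg hK D I μ + ρ * PhiD D := by
  obtain ⟨b, -, hb⟩ := exists_max_image univ (fun a => ∑ t, D t * μ t a) (univ_ne hK)
  refine sup'_le _ _ fun φ _ => ?_
  calc ∑ t, D t * (μ t (φ (I t)) - μ t (I t))
      ≤ ∑ t, D t * ((∑ s, D s * μ s b + ρ * Psi D t) - μ t (I t)) :=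
        sum_le_sum fun t _ => mul_le_mul_of_nonneg_left (by
          linarith [hslow.le_sum_mul_add_mul_Psi hD0 hD1 t (φ (I t)), hb (φ (I t)) (mem_univ _)])
          (hD0 t)
    _ = ∑ t, D t * (μ t b - μ t (I t)) + ρ * PhiD D := by
      simp only [mul_sub, mul_add, sum_sub_distrib, sum_add_distrib, ← sum_mul, hD1, one_mul,
        mul_left_comm _ ρ, ← mul_sum, sum_mul_Psi]
      ring
    _ ≤ extReg hK D I μ + ρ * PhiD D :=
      add_le_add_left (le_sup' (fun a => ∑ t, D t * (μ t a - μ t (I t))) (mem_univ b)) _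

end Regret

theorem stmt5_general {T K : ℕ} (hK : 2 ≤ K) (ρ : ℝ)
    (μ : Fin T → Fin K → ℝ)
    (hslow : SlowlyMoving μ ρ)
    (D : Fin T → ℝ) (hD0 : ∀ t, 0 ≤ D t) (hD1 : ∑ t, D t = 1)
    (I : Fin T → Fin K) :
    swapReg D I μ ≤ extReg hK D I μ + 2 * ρ * PhiD D := by
  have hρΦ : 0 ≤ ρ * PhiD D := by
    rcases le_or_gt T 1 with hT | hT
    · simp [PhiD_eq_zero_of_le_one hT]
    · exact mul_nonneg (hslow.nonneg hT (by omega)) (PhiD_nonneg hD0)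
  linarith [hslow.swapReg_le_extReg_add_mul_PhiD hK hD0 hD1 I]

/-- For a ρ-slowly-moving reward-mean sequence μ, temporal belief D and
recommendations I: the D-weighted pseudo swap-regret is at most the D-weighted
pseudo-regret plus the drift term 2ρ·Φ(D). -/
theorem stmt5 {T K : ℕ} (hK : 2 ≤ K) (ρ : ℝ)
    (μ : Fin T → Fin K → ℝ) (hμ : ∀ t a, μ t a ∈ Set.Icc (0 : ℝ) 1)
    (hslow : SlowlyMoving μ ρ)
    (D : Fin T → ℝ) (hD0 : ∀ t, 0 ≤ D t) (hD1 : ∑ t, D t = 1)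
    (I : Fin T → Fin K) :
    swapReg D I μ ≤ extReg hK D I μ + 2 * ρ * PhiD D :=
  stmt5_general hK ρ μ hslow D hD0 hD1 I
end
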